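/- arXiv:1908.09041 — 8 statements merged into one kernel-verified Lean document; each statement's English description precedes it below -/
import Mathlib

section
/- For every metric space (X,d), every finite nonempty set P of points of X, and every integer k with 1 ≤ k ≤ |P|, there exists a nonempty subset S ⊆ P with |S| ≤ k such that every point i ∈ P satisfies d(i,S) ≤ 2·NR(i). (Correctness of the greedy algorithm 2FairKCenter: 2-fairness is achievable on every instance.) -/
/-- The neighborhood radius of `x` with respect to population `P` and parameter `k`:
the minimum radius `r ≥ 0` such that the closed ball of radius `r` around `x`
contains at least `|P|/k` points of `P`. -/
noncomputable def NR {X : Type*} [MetricSpace X] (P : Finset X) (k : ℕ) (x : X) : ℝ :=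
  sInf {r : ℝ | 0 ≤ r ∧ (P.card : ℝ) / (k : ℝ) ≤ ((P.filter fun p => dist x p ≤ r).card : ℝ)}

lemma NR_nonneg {X : Type*} [MetricSpace X] (P : Finset X) (k : ℕ) (x : X) :
    0 ≤ NR P k x :=
  Real.sInf_nonneg (fun _ hr => hr.1)

/-- The infimum in the definition of `NR` is attained. -/
lemma NR_mem {X : Type*} [MetricSpace X] (P : Finset X) (hP : P.Nonempty) (k : ℕ)
    (hk1 : 1 ≤ k) (x : X) :
    (P.card : ℝ) / (k : ℝ) ≤ ((P.filter fun p => dist x p ≤ NR P k x).card : ℝ) := by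
  classical
  set A : Set ℝ := {r : ℝ | 0 ≤ r ∧
      (P.card : ℝ) / (k : ℝ) ≤ ((P.filter fun p => dist x p ≤ r).card : ℝ)} with hA
  have hkpos : (0:ℝ) < (k : ℝ) := by exact_mod_cast hk1
  have hnpos : (0:ℝ) < (P.card : ℝ) := by exact_mod_cast Finset.card_pos.mpr hP
  have hratio : (0:ℝ) < (P.card : ℝ) / (k : ℝ) := div_pos hnpos hkpos
  obtain ⟨p₀, hp₀⟩ := hP
  have hP : P.Nonempty := ⟨p₀, hp₀⟩
  have hR : P.sup' hP (dist x) ∈ A := by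
    constructor
    · exact le_trans dist_nonneg (Finset.le_sup' (dist x) hp₀)
    · have hfull : P.filter (fun p => dist x p ≤ P.sup' hP (dist x)) = P := by
        apply Finset.filter_true_of_mem
        intro p hp
        exact Finset.le_sup' (dist x) hp
      rw [hfull]
      exact div_le_self hnpos.le (by exact_mod_cast hk1)
  have key : ∀ r ∈ A, ∃ r' ∈ A, r' ∈ P.image (dist x) ∧ r' ≤ r := by
    intro r hr
    obtain ⟨hr0, hrc⟩ := hr
    have hQc : (0:ℝ) < ((P.filter fun p => dist x p ≤ r).card : ℝ) := lt_of_lt_of_le hratio hrc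
    have hQne : (P.filter fun p => dist x p ≤ r).Nonempty :=
      Finset.card_pos.mp (by exact_mod_cast hQc)
    set Q := P.filter (fun p => dist x p ≤ r) with hQ
    obtain ⟨q, hqQ, hq⟩ := Finset.exists_mem_eq_sup' hQne (dist x)
    refine ⟨Q.sup' hQne (dist x), ?_, ?_, ?_⟩
    · constructor
      · rw [hq]; exact dist_nonneg
      · refine le_trans hrc ?_
        have : Q ⊆ P.filter (fun p => dist x p ≤ Q.sup' hQne (dist x)) := by
          intro p hp
          rw [Finset.mem_filter]
          exact ⟨(Finset.mem_filter.mp hp).1, Finset.le_sup' (dist x) hp⟩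
        exact_mod_cast Finset.card_le_card this
    · rw [hq]
      exact Finset.mem_image_of_mem (dist x) (Finset.mem_filter.mp hqQ).1
    · apply Finset.sup'_le
      intro p hp
      exact (Finset.mem_filter.mp hp).2
  set F : Finset ℝ := (P.image (dist x)).filter (fun r => r ∈ A) with hF
  obtain ⟨rR, hrRA, hrRim, _⟩ := key _ hR
  have hFne : F.Nonempty := ⟨rR, Finset.mem_filter.mpr ⟨hrRim, hrRA⟩⟩
  have haA : F.min' hFne ∈ A := (Finset.mem_filter.mp (F.min'_mem hFne)).2
  have hlb : ∀ r ∈ A, F.min' hFne ≤ r := by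
    intro r hr
    obtain ⟨r', hr'A, hr'im, hr'le⟩ := key r hr
    exact le_trans (F.min'_le r' (Finset.mem_filter.mpr ⟨hr'im, hr'A⟩)) hr'le
  have hinf : NR P k x = F.min' hFne := by
    have hArw : NR P k x = sInf A := rfl
    rw [hArw]
    exact le_antisymm (csInf_le ⟨0, fun r hr => hr.1⟩ haA) (le_csInf ⟨_, hR⟩ hlb)
  rw [hinf]
  exact haA.2

/-- Greedy selection: from any `T` we can pick `S ⊆ T` with well-separated `NR`-balls
covering `T` within factor `2`. -/
lemma greedy {X : Type*} [MetricSpace X] (P : Finset X) (k : ℕ) (T : Finset X) :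
    ∃ S : Finset X, S ⊆ T ∧ (T.Nonempty → S.Nonempty) ∧
      (∀ s ∈ S, ∀ s' ∈ S, s ≠ s' → NR P k s + NR P k s' < dist s s') ∧
      (∀ i ∈ T, ∃ s ∈ S, dist i s ≤ 2 * NR P k i) := by
  classical
  induction T using Finset.strongInduction with
  | _ T ih =>
    rcases T.eq_empty_or_nonempty with rfl | hT
    · exact ⟨∅, Finset.Subset.refl _, fun h => absurd h (by simp), by simp, by simp⟩
    · obtain ⟨i₀, hi₀T, hi₀min⟩ := T.exists_min_image (NR P k) hT
      set T' := T.filter (fun j => NR P k j + NR P k i₀ < dist j i₀) with hT'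
      have hi₀notT' : i₀ ∉ T' := by
        simp only [hT', Finset.mem_filter]
        rintro ⟨-, h⟩
        rw [dist_self] at h
        have := NR_nonneg P k i₀
        linarith
      have hss : T' ⊂ T :=
        Finset.ssubset_iff_of_subset (Finset.filter_subset _ _) |>.mpr ⟨i₀, hi₀T, hi₀notT'⟩
      obtain ⟨S', hS'sub, -, hS'sep, hS'cov⟩ := ih T' hss
      refine ⟨insert i₀ S', ?_, fun _ => ⟨i₀, Finset.mem_insert_self _ _⟩, ?_, ?_⟩
      · intro s hs
        rcases Finset.mem_insert.mp hs with rfl | hs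
        · exact hi₀T
        · exact (Finset.filter_subset _ _) (hS'sub hs)
      · intro s hs s' hs' hne
        rcases Finset.mem_insert.mp hs with heq | hsm
        · rcases Finset.mem_insert.mp hs' with heq' | hsm'
          · exact absurd (heq.trans heq'.symm) hne
          · have := (Finset.mem_filter.mp (hS'sub hsm')).2
            rw [heq, dist_comm]
            linarith
        · rcases Finset.mem_insert.mp hs' with heq' | hsm'
          · have := (Finset.mem_filter.mp (hS'sub hsm)).2
            rw [heq']
            linarith
          · exact hS'sep s hsm s' hsm' hne
      · intro i hi
        by_cases hiT' : i ∈ T'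
        · obtain ⟨s, hsS', hd⟩ := hS'cov i hiT'
          exact ⟨s, Finset.mem_insert_of_mem hsS', hd⟩
        · refine ⟨i₀, Finset.mem_insert_self _ _, ?_⟩
          have h1 : ¬ (NR P k i + NR P k i₀ < dist i i₀) := by
            intro h
            exact hiT' (Finset.mem_filter.mpr ⟨hi, h⟩)
          push_neg at h1
          have h2 : NR P k i₀ ≤ NR P k i := hi₀min i hi
          linarith

/-- 2-fairness is achievable on every instance, in every metric space. -/
theorem two_fairness_achievable {X : Type*} [MetricSpace X] (P : Finset X) (hP : P.Nonempty)
    (k : ℕ) (hk1 : 1 ≤ k) (hk2 : k ≤ P.card) :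
    ∃ S : Finset X, S ⊆ P ∧ S.Nonempty ∧ S.card ≤ k ∧
      ∀ i ∈ P, Metric.infDist i (S : Set X) ≤ 2 * NR P k i := by
  classical
  obtain ⟨S, hSsub, hSne, hSsep, hScov⟩ := greedy P k P
  have hkpos : (0:ℝ) < (k : ℝ) := by exact_mod_cast hk1
  have hnpos : (0:ℝ) < (P.card : ℝ) := by exact_mod_cast Finset.card_pos.mpr hP
  set B : X → Finset X := fun s => P.filter (fun p => dist s p ≤ NR P k s) with hB
  have hdisj : ∀ s ∈ S, ∀ s' ∈ S, s ≠ s' → Disjoint (B s) (B s') := by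
    intro s hs s' hs' hne
    rw [Finset.disjoint_left]
    intro p hp hp'
    have h1 := (Finset.mem_filter.mp hp).2
    have h2 := (Finset.mem_filter.mp hp').2
    have h3 := hSsep s hs s' hs' hne
    have h4 : dist s s' ≤ dist s p + dist p s' := dist_triangle s p s'
    rw [dist_comm p s'] at h4
    linarith
  have hcard_eq : (S.biUnion B).card = ∑ s ∈ S, (B s).card := Finset.card_biUnion hdisj
  have hsub : S.biUnion B ⊆ P := by
    intro p hp
    obtain ⟨s, -, hps⟩ := Finset.mem_biUnion.mp hp
    exact (Finset.mem_filter.mp hps).1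
  have hsum_le : (∑ s ∈ S, ((B s).card : ℝ)) ≤ (P.card : ℝ) := by
    have : ∑ s ∈ S, (B s).card ≤ P.card := hcard_eq ▸ Finset.card_le_card hsub
    exact_mod_cast this
  have hlow : (S.card : ℝ) * ((P.card : ℝ) / (k : ℝ)) ≤ ∑ s ∈ S, ((B s).card : ℝ) := by
    have := Finset.card_nsmul_le_sum S (fun s => ((B s).card : ℝ)) ((P.card : ℝ) / (k : ℝ))
      (fun s _ => NR_mem P hP k hk1 s)
    simpa [nsmul_eq_mul] using this
  have hcardk : S.card ≤ k := by
    have h : (S.card : ℝ) * ((P.card : ℝ) / (k : ℝ)) ≤ (P.card : ℝ) := le_trans hlow hsum_le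
    have h2 : (S.card : ℝ) * (P.card : ℝ) ≤ (k : ℝ) * (P.card : ℝ) := by
      have h' := mul_le_mul_of_nonneg_right h hkpos.le
      calc (S.card : ℝ) * (P.card : ℝ)
            = (S.card : ℝ) * ((P.card : ℝ) / (k : ℝ)) * (k : ℝ) := by field_simp
        _ ≤ (P.card : ℝ) * (k : ℝ) := h'
        _ = (k : ℝ) * (P.card : ℝ) := mul_comm _ _
    have h3 : (S.card : ℝ) ≤ (k : ℝ) := le_of_mul_le_mul_right h2 hnpos
    exact_mod_cast h3
  refine ⟨S, hSsub, hSne hP, hcardk, ?_⟩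
  intro i hi
  obtain ⟨s, hsS, hd⟩ := hScov i hi
  exact le_trans (Metric.infDist_le_dist_of_mem (by exact_mod_cast hsS)) hd
end

section
/- For every metric space (X,d), every finite nonempty set P of points of X, every integer k with 1 ≤ k ≤ |P|, and every nonempty subset S ⊆ P with |S| ≤ k, there exists a point i ∈ P such that NR(i) ≤ 2·d(i,S). (No set of at most k centers can be α-fair for any α < 1/2.) -/
/-- No set of at most `k` centers can be `α`-fair for any `α < 1/2`: some point `i ∈ P`
has `NR(i) ≤ 2·d(i,S)`. -/
theorem half_fairness_lower_bound {X : Type*} [MetricSpace X] (P : Finset X) (hP : P.Nonempty)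
    (k : ℕ) (hk1 : 1 ≤ k) (hk2 : k ≤ P.card)
    (S : Finset X) (hSP : S ⊆ P) (hS : S.Nonempty) (hScard : S.card ≤ k) :
    ∃ i ∈ P, NR P k i ≤ 2 * Metric.infDist i (S : Set X) := by
  classical
  -- nearest-center assignment
  have hchoice : ∀ p : X, ∃ s, s ∈ S ∧ ∀ t ∈ S, dist p s ≤ dist p t := by
    intro p
    obtain ⟨s, hs, hmin⟩ := S.exists_min_image (fun t => dist p t) hS
    exact ⟨s, hs, hmin⟩
  set c : X → X := fun p => (hchoice p).choose with hc
  have hcS : ∀ p, c p ∈ S := fun p => (hchoice p).choose_spec.1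
  have hcmin : ∀ p, ∀ t ∈ S, dist p (c p) ≤ dist p t :=
    fun p => (hchoice p).choose_spec.2
  have hS0 : (0 : ℝ) < S.card := by
    exact_mod_cast Finset.card_pos.mpr hS
  have hk0 : (0 : ℝ) < k := by exact_mod_cast hk1
  -- pigeonhole: some fiber is large
  have hsum : ∑ s ∈ S, ((P.filter fun p => c p = s).card : ℝ) = (P.card : ℝ) := by
    rw [← Nat.cast_sum]
    norm_cast
    exact (Finset.card_eq_sum_card_fiberwise (fun p _ => hcS p)).symm
  have hpig : ∃ s ∈ S, (P.card : ℝ) / (S.card : ℝ) ≤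
      ((P.filter fun p => c p = s).card : ℝ) := by
    by_contra h
    push_neg at h
    have : ∑ s ∈ S, ((P.filter fun p => c p = s).card : ℝ) <
        ∑ s ∈ S, (P.card : ℝ) / (S.card : ℝ) :=
      Finset.sum_lt_sum_of_nonempty hS h
    rw [hsum, Finset.sum_const, nsmul_eq_mul, mul_div_cancel₀ _ (ne_of_gt hS0)] at this
    exact lt_irrefl _ this
  obtain ⟨s, hsS, hbig⟩ := hpig
  set T := P.filter fun p => c p = s with hT
  have hTne : T.Nonempty := by
    rw [← Finset.card_pos]
    by_contra h
    push_neg at h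
    interval_cases hTc : T.card
    · simp [hTc] at hbig
      have : (0:ℝ) < (P.card : ℝ) / (S.card : ℝ) :=
        div_pos (by exact_mod_cast Finset.card_pos.mpr hP) hS0
      linarith
  -- pick farthest point in the fiber
  obtain ⟨i, hiT, hmax⟩ := T.exists_max_image (fun p => dist p s) hTne
  have hiP : i ∈ P := (Finset.mem_filter.mp hiT).1
  have hci : c i = s := (Finset.mem_filter.mp hiT).2
  refine ⟨i, hiP, ?_⟩
  -- infDist i S = dist i s
  have hinf : Metric.infDist i (S : Set X) = dist i s := by
    apply le_antisymm
    · exact Metric.infDist_le_dist_of_mem (by exact_mod_cast hsS)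
    · by_contra h
      push_neg at h
      obtain ⟨y, hy, hlt⟩ := (Metric.infDist_lt_iff ⟨s, by exact_mod_cast hsS⟩).mp h
      have := hcmin i y (by exact_mod_cast hy)
      rw [hci] at this
      linarith
  rw [hinf]
  -- NR bound: 2 * dist i s is in the set
  have hmem : 2 * dist i s ∈ {r : ℝ | 0 ≤ r ∧
      (P.card : ℝ) / (k : ℝ) ≤ ((P.filter fun p => dist i p ≤ r).card : ℝ)} := by
    constructor
    · positivity
    · have hsub : T ⊆ P.filter fun p => dist i p ≤ 2 * dist i s := by
        intro j hjT
        have hjP : j ∈ P := (Finset.mem_filter.mp hjT).1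
        have hjs : dist j s ≤ dist i s := hmax j hjT
        refine Finset.mem_filter.mpr ⟨hjP, ?_⟩
        calc dist i j ≤ dist i s + dist s j := dist_triangle _ _ _
          _ = dist i s + dist j s := by rw [dist_comm s j]
          _ ≤ 2 * dist i s := by linarith
      have h1 : (P.card : ℝ) / (k : ℝ) ≤ (P.card : ℝ) / (S.card : ℝ) := by
        apply div_le_div_of_nonneg_left (by positivity) hS0
        exact_mod_cast hScard
      have h2 : (T.card : ℝ) ≤ ((P.filter fun p => dist i p ≤ 2 * dist i s).card : ℝ) := by
        exact_mod_cast Finset.card_le_card hsub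
      linarith
  have hbdd : BddBelow {r : ℝ | 0 ≤ r ∧
      (P.card : ℝ) / (k : ℝ) ≤ ((P.filter fun p => dist i p ≤ r).card : ℝ)} :=
    ⟨0, fun r hr => hr.1⟩
  exact csInf_le hbdd hmem
end

section
/- Let (X,d) be a metric space, P a finite nonempty set of points of X, and k an integer with 1 ≤ k ≤ |P|, and assume NR(i) > 0 for every i ∈ P. If there exist a real number α' and a nonempty subset S' ⊆ P with |S'| ≤ k such that d(i,S') ≤ α'·NR(i) for all i ∈ P, then α' ≥ 1/2, and there exists a nonempty subset S ⊆ P with |S| ≤ k such that d(i,S) ≤ 4·α'·NR(i) for all i ∈ P. (The 2-fair greedy algorithm is a 4-approximation for the optimal fairness value.) -/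
/-- If some nonempty `S' ⊆ P` with `|S'| ≤ k` is `α'`-fair, then `α' ≥ 1/2`, and there is a
nonempty `S ⊆ P` with `|S| ≤ k` that is `4·α'`-fair (the 2-fair greedy algorithm is a
4-approximation for the optimal fairness value). -/
theorem four_approximation {X : Type*} [MetricSpace X] (P : Finset X) (hP : P.Nonempty)
    (k : ℕ) (hk1 : 1 ≤ k) (hk2 : k ≤ P.card)
    (hpos : ∀ i ∈ P, 0 < NR P k i)
    (α' : ℝ) (S' : Finset X) (hS'P : S' ⊆ P) (hS' : S'.Nonempty) (hS'card : S'.card ≤ k)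
    (hfair : ∀ i ∈ P, Metric.infDist i (S' : Set X) ≤ α' * NR P k i) :
    1 / 2 ≤ α' ∧
    ∃ S : Finset X, S ⊆ P ∧ S.Nonempty ∧ S.card ≤ k ∧
      ∀ i ∈ P, Metric.infDist i (S : Set X) ≤ 4 * α' * NR P k i := by
  classical
  have hc : ∀ i : X, ∃ s ∈ S', Metric.infDist i (S' : Set X) = dist i s := by
    intro i
    exact (S'.finite_toSet.isCompact).exists_infDist_eq_dist
      (Finset.coe_nonempty.mpr hS') i
  choose c hcmem hceq using hc
  -- α' ≥ 0
  obtain ⟨s0, hs0⟩ := hS'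
  have hα0 : 0 ≤ α' := by
    have h1 := hfair s0 (hS'P hs0)
    have h2 : Metric.infDist s0 (S' : Set X) = 0 :=
      Metric.infDist_zero_of_mem (by exact_mod_cast hs0)
    have h3 := hpos s0 (hS'P hs0)
    nlinarith [h2 ▸ h1]
  have hhalf : (1:ℝ)/2 ≤ α' := by
    by_contra hlt
    push_neg at hlt
    set C : X → Finset X := fun s => P.filter fun i => c i = s with hC
    have hsum : P.card = ∑ s ∈ S', (C s).card :=
      Finset.card_eq_sum_card_fiberwise (fun i _ => hcmem i)
    have hex : ∃ s ∈ S', P.card ≤ (C s).card * S'.card := by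
      by_contra h
      push_neg at h
      have hlt2 : ∑ s ∈ S', (C s).card * S'.card < ∑ s ∈ S', P.card :=
        Finset.sum_lt_sum_of_nonempty ⟨s0, hs0⟩ (fun s hs => h s hs)
      rw [← Finset.sum_mul, ← hsum, Finset.sum_const, smul_eq_mul,
        mul_comm S'.card P.card] at hlt2
      exact lt_irrefl _ hlt2
    obtain ⟨s, hsS, hcard⟩ := hex
    have hPpos : 0 < P.card := Finset.card_pos.mpr hP
    have hCne : (C s).Nonempty := by
      rw [← Finset.card_pos]
      by_contra h
      push_neg at h
      interval_cases h' : (C s).card <;> omega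
    obtain ⟨y, hyC, hymax⟩ := (C s).exists_max_image (fun i => NR P k i) hCne
    have hyP : y ∈ P := (Finset.mem_filter.mp hyC).1
    have hcy : c y = s := (Finset.mem_filter.mp hyC).2
    set r := (C s).sup' hCne (fun x => dist y x) with hr
    have hrmem : r ∈ {r : ℝ | 0 ≤ r ∧
        (P.card : ℝ) / (k : ℝ) ≤ ((P.filter fun p => dist y p ≤ r).card : ℝ)} := by
      constructor
      · have : dist y y ≤ r := Finset.le_sup' _ hyC
        simpa using this
      · have hsub : C s ⊆ P.filter fun p => dist y p ≤ r := by
          intro x hx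
          exact Finset.mem_filter.mpr ⟨(Finset.mem_filter.mp hx).1, Finset.le_sup' _ hx⟩
        have h1 : (C s).card ≤ (P.filter fun p => dist y p ≤ r).card :=
          Finset.card_le_card hsub
        have hk0 : (0:ℝ) < k := by exact_mod_cast hk1
        have h2 : (P.card : ℝ) ≤ (C s).card * k := by
          have h3 : (C s).card * S'.card ≤ (C s).card * k :=
            Nat.mul_le_mul_left _ hS'card
          exact_mod_cast le_trans hcard h3
        rw [div_le_iff₀ hk0]
        have h4 : ((C s).card : ℝ) ≤ ((P.filter fun p => dist y p ≤ r).card : ℝ) := by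
          exact_mod_cast h1
        nlinarith
    have hbdd : BddBelow {r : ℝ | 0 ≤ r ∧
        (P.card : ℝ) / (k : ℝ) ≤ ((P.filter fun p => dist y p ≤ r).card : ℝ)} :=
      ⟨0, fun x hx => hx.1⟩
    have hNRle : NR P k y ≤ r := csInf_le hbdd hrmem
    obtain ⟨x0, hx0, hrx0⟩ := Finset.exists_mem_eq_sup' hCne (fun x => dist y x)
    have hx0P : x0 ∈ P := (Finset.mem_filter.mp hx0).1
    have hcx0 : c x0 = s := (Finset.mem_filter.mp hx0).2
    have h1 : dist y s ≤ α' * NR P k y := by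
      have h := hfair y hyP
      rw [hceq y, hcy] at h
      exact h
    have h2 : dist x0 s ≤ α' * NR P k x0 := by
      have h := hfair x0 hx0P
      rw [hceq x0, hcx0] at h
      exact h
    have h3 : NR P k x0 ≤ NR P k y := hymax x0 hx0
    have h4 : r ≤ dist y s + dist s x0 := by
      rw [hr, hrx0]
      exact dist_triangle y s x0
    have hNRy := hpos y hyP
    have h5 : dist s x0 = dist x0 s := dist_comm s x0
    have hNRx0pos := hpos x0 hx0P
    nlinarith
  refine ⟨hhalf, S', hS'P, ⟨s0, hs0⟩, hS'card, fun i hi => ?_⟩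
  have h1 := hfair i hi
  have h2 := hpos i hi
  nlinarith
end

section
/- Work in ℝ² equipped with the ℓ¹ (taxicab) metric d₁, and let P be the 12-point set { (10a + i, j) : a ∈ {0,1,2}, i ∈ {0,1}, j ∈ {0,1} } (three axis-aligned unit squares whose pairwise separation exceeds their diameter), with k = 4. Then NR(i) = 1 for every i ∈ P, and for every subset S ⊆ P with |S| ≤ 4 there exists a point i ∈ P with d₁(i,S) ≥ 2 = 2·NR(i). (There is a metric-space instance on which no choice of centers is α-fair for any α < 2, matching the 2-fairness upper bound.) -/
/-- Three axis-aligned unit squares in the plane with the ℓ¹ (taxicab) metric,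
separated by distance 10 − 1 > 1. -/
noncomputable def threeSquaresL1 : Finset (WithLp 1 (ℝ × ℝ)) := by
  classical
  exact
  (Finset.range 3 ×ˢ Finset.range 2 ×ˢ Finset.range 2).image fun t =>
    (WithLp.equiv 1 (ℝ × ℝ)).symm ((10 * t.1 + t.2.1 : ℝ), (t.2.2 : ℝ))

namespace ThreeSqAux

def gpt (t : ℕ × ℕ × ℕ) : WithLp 1 (ℝ × ℝ) :=
  (WithLp.equiv 1 (ℝ × ℝ)).symm ((10 * t.1 + t.2.1 : ℝ), (t.2.2 : ℝ))

def D (t t' : ℕ × ℕ × ℕ) : ℕ :=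
  ((10 * t.1 + t.2.1 : ℤ) - (10 * t'.1 + t'.2.1)).natAbs + ((t.2.2 : ℤ) - t'.2.2).natAbs

def T : Finset (ℕ × ℕ × ℕ) := Finset.range 3 ×ˢ Finset.range 2 ×ˢ Finset.range 2

lemma dist_gpt (t t' : ℕ × ℕ × ℕ) : dist (gpt t) (gpt t') = (D t t' : ℝ) := by
  have h := WithLp.prod_dist_eq_add (p := 1) (α := ℝ) (β := ℝ) (by norm_num) (gpt t) (gpt t')
  simp only [ENNReal.toReal_one, Real.rpow_one, one_div, inv_one] at h
  rw [h]
  show dist ((10*t.1+t.2.1 : ℝ)) ((10*t'.1+t'.2.1:ℝ)) + dist ((t.2.2:ℝ)) ((t'.2.2:ℝ)) = _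
  rw [Real.dist_eq, Real.dist_eq, D]
  push_cast [Nat.cast_natAbs]
  ring_nf

lemma LD0 : ∀ t ∈ T, ∀ t' ∈ T, D t t' = 0 → t = t' := by decide

lemma injOnT : Set.InjOn gpt T := by
  intro t ht t' ht' h
  have hd : dist (gpt t) (gpt t') = 0 := by rw [h]; simp
  rw [dist_gpt] at hd
  exact LD0 t ht t' ht' (by exact_mod_cast hd)

lemma mem_iff : ∀ x, x ∈ threeSquaresL1 ↔ ∃ t ∈ T, gpt t = x := by
  classical
  intro x
  unfold threeSquaresL1
  rw [Finset.mem_image]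
  exact Iff.rfl

lemma memP : ∀ t ∈ T, gpt t ∈ threeSquaresL1 := fun t ht => (mem_iff _).mpr ⟨t, ht, rfl⟩

lemma cardP : threeSquaresL1.card = 12 := by
  classical
  unfold threeSquaresL1
  rw [Finset.card_image_of_injOn]
  · decide
  · exact injOnT

def fi (t : ℕ × ℕ × ℕ) : ℕ × ℕ × ℕ := (t.1, 1 - t.2.1, t.2.2)
def fj (t : ℕ × ℕ × ℕ) : ℕ × ℕ × ℕ := (t.1, t.2.1, 1 - t.2.2)

lemma Lflip : ∀ t ∈ T, fi t ∈ T ∧ fj t ∈ T ∧ D t (fi t) = 1 ∧ D t (fj t) = 1 ∧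
    fi t ≠ t ∧ fj t ≠ t ∧ fi t ≠ fj t := by decide

lemma L2 : ∀ t ∈ T, ∀ a ∈ Finset.range 3, ∀ i0 ∈ Finset.range 2, ∀ j0 ∈ Finset.range 2,
    (t.1 ≠ a ∨ t = (a, i0, j0)) → 2 ≤ D (a, 1 - i0, 1 - j0) t := by decide

lemma LwT : ∀ a ∈ Finset.range 3, ∀ i0 ∈ Finset.range 2, ∀ j0 ∈ Finset.range 2,
    (a, 1 - i0, 1 - j0) ∈ T := by decide

end ThreeSqAux

open ThreeSqAux in
/-- On three well-separated unit squares in the ℓ¹ plane with `k = 4`, every point has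
neighborhood radius 1, yet every choice of at most 4 centers leaves some point at
distance at least `2 = 2·NR(i)` from all centers. -/
theorem l1_squares_two_fairness_tight :
    (∀ i ∈ threeSquaresL1, NR threeSquaresL1 4 i = 1) ∧
    ∀ S : Finset (WithLp 1 (ℝ × ℝ)), S ⊆ threeSquaresL1 → S.card ≤ 4 →
      ∃ i ∈ threeSquaresL1, ∀ s ∈ S, 2 ≤ dist i s := by
  classical
  have hquot : (threeSquaresL1.card : ℝ) / ((4 : ℕ) : ℝ) = 3 := by rw [cardP]; norm_num
  constructor
  · -- Part 1
    intro i hi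
    obtain ⟨t, ht, rfl⟩ := (mem_iff i).mp hi
    obtain ⟨hfiT, hfjT, hDfi, hDfj, hfi_ne, hfj_ne, hij_ne⟩ := Lflip t ht
    have mem1 : (1 : ℝ) ∈ {r : ℝ | 0 ≤ r ∧ (threeSquaresL1.card : ℝ) / ((4:ℕ) : ℝ) ≤
        (((threeSquaresL1.filter fun p => dist (gpt t) p ≤ r).card : ℝ))} := by
      refine ⟨zero_le_one, ?_⟩
      rw [hquot]
      have hsub : ({gpt t, gpt (fi t), gpt (fj t)} : Finset (WithLp 1 (ℝ × ℝ))) ⊆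
          threeSquaresL1.filter fun p => dist (gpt t) p ≤ 1 := by
        intro x hx
        simp only [Finset.mem_insert, Finset.mem_singleton] at hx
        rcases hx with rfl | rfl | rfl
        · exact Finset.mem_filter.mpr ⟨memP t ht, by simp⟩
        · exact Finset.mem_filter.mpr ⟨memP _ hfiT, by rw [dist_gpt, hDfi]; norm_num⟩
        · exact Finset.mem_filter.mpr ⟨memP _ hfjT, by rw [dist_gpt, hDfj]; norm_num⟩
      have hne1 : gpt t ≠ gpt (fi t) := fun h => hfi_ne (injOnT hfiT ht h.symm)
      have hne2 : gpt t ≠ gpt (fj t) := fun h => hfj_ne (injOnT hfjT ht h.symm)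
      have hne3 : gpt (fi t) ≠ gpt (fj t) := fun h => hij_ne (injOnT hfiT hfjT h)
      have hc3 : ({gpt t, gpt (fi t), gpt (fj t)} : Finset (WithLp 1 (ℝ × ℝ))).card = 3 := by
        rw [Finset.card_insert_of_notMem (by simp [hne1, hne2]),
          Finset.card_insert_of_notMem (by simp [hne3]), Finset.card_singleton]
      have hle := Finset.card_le_card hsub
      rw [hc3] at hle
      exact_mod_cast hle
    have lb : ∀ r ∈ {r : ℝ | 0 ≤ r ∧ (threeSquaresL1.card : ℝ) / ((4:ℕ) : ℝ) ≤
        (((threeSquaresL1.filter fun p => dist (gpt t) p ≤ r).card : ℝ))}, (1 : ℝ) ≤ r := by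
      rintro r ⟨hr0, hr⟩
      by_contra hlt
      push_neg at hlt
      have hsub : (threeSquaresL1.filter fun p => dist (gpt t) p ≤ r) ⊆ {gpt t} := by
        intro x hx
        obtain ⟨hxP, hxd⟩ := Finset.mem_filter.mp hx
        obtain ⟨t', ht', rfl⟩ := (mem_iff x).mp hxP
        rw [dist_gpt] at hxd
        have hD0 : D t t' = 0 := by
          by_contra h0
          have : (1 : ℝ) ≤ (D t t' : ℝ) := by exact_mod_cast Nat.one_le_iff_ne_zero.mpr h0
          linarith
        rw [LD0 t ht t' ht' hD0]
        exact Finset.mem_singleton_self _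
      have hle := Finset.card_le_card hsub
      rw [Finset.card_singleton] at hle
      rw [hquot] at hr
      have h1 : ((threeSquaresL1.filter fun p => dist (gpt t) p ≤ r).card : ℝ) ≤ 1 := by
        exact_mod_cast hle
      linarith
    unfold NR
    exact le_antisymm (csInf_le ⟨0, fun r hr => hr.1⟩ mem1) (le_csInf ⟨1, mem1⟩ lb)
  · -- Part 2
    intro S hSP hScard
    set S' : Finset (ℕ × ℕ × ℕ) := T.filter (fun t => gpt t ∈ S) with hS'
    have hS'card : S'.card ≤ 4 := by
      have himg : S'.image gpt ⊆ S := by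
        intro x hx
        obtain ⟨t, ht, rfl⟩ := Finset.mem_image.mp hx
        exact (Finset.mem_filter.mp ht).2
      have hinj := Finset.card_image_of_injOn (f := gpt) (s := S')
        (injOnT.mono (fun t ht => Finset.mem_coe.mpr (Finset.filter_subset _ _ ht)))
      calc S'.card = (S'.image gpt).card := hinj.symm
        _ ≤ S.card := Finset.card_le_card himg
        _ ≤ 4 := hScard
    have hcover : ∀ s ∈ S, ∃ t ∈ S', gpt t = s := by
      intro s hs
      obtain ⟨t, ht, rfl⟩ := (mem_iff s).mp (hSP hs)
      exact ⟨t, Finset.mem_filter.mpr ⟨ht, hs⟩, rfl⟩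
    have hsum : ∑ a ∈ Finset.range 3, (S'.filter fun t => t.1 = a).card = S'.card := by
      refine (Finset.card_eq_sum_card_fiberwise (fun t ht => ?_)).symm
      have h1 : t ∈ T := Finset.filter_subset _ _ ht
      have h2 : t.1 < 3 := Finset.mem_range.mp (Finset.mem_product.mp h1).1
      simpa using h2
    have hpig : ∃ a ∈ Finset.range 3, (S'.filter fun t => t.1 = a).card ≤ 1 := by
      by_contra h
      push_neg at h
      have h6 : 6 ≤ ∑ a ∈ Finset.range 3, (S'.filter fun t => t.1 = a).card := by
        calc (6:ℕ) = ∑ _a ∈ Finset.range 3, 2 := by simp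
          _ ≤ _ := Finset.sum_le_sum (fun a ha => h a ha)
      omega
    obtain ⟨a, ha3, hfib⟩ := hpig
    have h2r : (1:ℕ) ∈ Finset.range 2 := by decide
    rcases Finset.eq_empty_or_nonempty (S'.filter fun t => t.1 = a) with hemp | ⟨t0, ht0⟩
    · -- no center in square a : use point (a, 1-1, 1-1) = (a,0,0)
      refine ⟨gpt (a, 1 - 1, 1 - 1), memP _ (LwT a ha3 1 h2r 1 h2r), ?_⟩
      intro s hs
      obtain ⟨t, htS', rfl⟩ := hcover s hs
      have htT : t ∈ T := Finset.filter_subset _ _ htS'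
      have hta : t.1 ≠ a := by
        intro h
        exact Finset.notMem_empty t (hemp ▸ Finset.mem_filter.mpr ⟨htS', h⟩)
      rw [dist_gpt]
      exact_mod_cast L2 t htT a ha3 1 h2r 1 h2r (Or.inl hta)
    · -- exactly one center in square a
      have ht0S' : t0 ∈ S' := (Finset.mem_filter.mp ht0).1
      have ht0a : t0.1 = a := (Finset.mem_filter.mp ht0).2
      have ht0T : t0 ∈ T := Finset.filter_subset _ _ ht0S'
      have hi0 : t0.2.1 ∈ Finset.range 2 := (Finset.mem_product.mp (Finset.mem_product.mp ht0T).2).1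
      have hj0 : t0.2.2 ∈ Finset.range 2 := (Finset.mem_product.mp (Finset.mem_product.mp ht0T).2).2
      refine ⟨gpt (a, 1 - t0.2.1, 1 - t0.2.2), memP _ (LwT a ha3 _ hi0 _ hj0), ?_⟩
      intro s hs
      obtain ⟨t, htS', rfl⟩ := hcover s hs
      have htT : t ∈ T := Finset.filter_subset _ _ htS'
      rw [dist_gpt]
      refine (Nat.ofNat_le_cast).mpr (L2 t htT a ha3 _ hi0 _ hj0 ?_)
      by_cases hta : t.1 = a
      · right
        have := Finset.card_le_one.mp hfib t (Finset.mem_filter.mpr ⟨htS', hta⟩) t0 ht0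
        rw [this]
        exact Prod.ext ht0a rfl
      · exact Or.inl hta
end

section
/- For every finite nonempty set P of real numbers (with the standard metric on ℝ) and every integer k with 1 ≤ k ≤ |P|, there exists a subset S ⊆ P with |S| ≤ k such that every point i ∈ P satisfies d(i,S) ≤ NR(i). (On the real line, 1-fairness is always achievable: taking every ⌈|P|/k⌉-th point in sorted order works.) -/
/-- On the real line, 1-fairness is always achievable: there is a set `S ⊆ P` of at most
`k` centers with `d(i,S) ≤ NR(i)` for every `i ∈ P`. -/
theorem real_line_one_fairness (P : Finset ℝ) (hP : P.Nonempty)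
    (k : ℕ) (hk1 : 1 ≤ k) (hk2 : k ≤ P.card) :
    ∃ S : Finset ℝ, S ⊆ P ∧ S.Nonempty ∧ S.card ≤ k ∧
      ∀ i ∈ P, Metric.infDist i (S : Set ℝ) ≤ NR P k i := by
  classical
  set n := P.card with hn
  have hn1 : 1 ≤ n := le_trans hk1 hk2
  set f := P.orderIsoOfFin hn.symm with hf
  set e : Fin n → ℝ := fun i => (f i : ℝ) with he
  have emem : ∀ i, e i ∈ P := fun i => (f i).2
  have emono : Monotone e := fun i j h => Subtype.coe_le_coe.mpr (f.monotone h)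
  have einj : Function.Injective e := fun i j h => f.injective (Subtype.ext h)
  have esurj : ∀ p ∈ P, ∃ t, e t = p := by
    intro p hp
    obtain ⟨t, ht⟩ := f.surjective ⟨p, hp⟩
    exact ⟨t, congrArg Subtype.val ht⟩
  clear_value f e
  set m : ℕ := ⌈(n : ℝ) / k⌉₊ with hm
  have hk0 : (0:ℝ) < k := by exact_mod_cast hk1
  have hn0 : (0:ℝ) < n := by exact_mod_cast hn1
  have hm1 : 1 ≤ m := Nat.one_le_ceil_iff.mpr (by positivity)
  have hm0 : 0 < m := hm1
  have hkm : n ≤ k * m := by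
    have h := Nat.le_ceil ((n:ℝ)/k)
    rw [div_le_iff₀ hk0] at h
    have : (n:ℝ) ≤ (k*m : ℕ) := by push_cast; linarith
    exact_mod_cast this
  set S : Finset ℝ := (Finset.range k).image (fun j => e ⟨min (j*m) (n-1), by omega⟩) with hS
  clear_value S
  have hSsub : S ⊆ P := by
    intro x hx
    simp only [hS, Finset.mem_image] at hx
    obtain ⟨j, _, rfl⟩ := hx
    exact emem _
  refine ⟨S, hSsub, ?_, ?_, ?_⟩
  · rw [hS]
    exact Finset.Nonempty.image ⟨0, Finset.mem_range.mpr hk1⟩ _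
  · rw [hS]
    exact le_trans Finset.card_image_le (by simp)
  · intro i hi
    obtain ⟨t, rfl⟩ := esurj i hi
    apply le_csInf
    · refine ⟨P.sup' hP (fun p => dist (e t) p), ?_, ?_⟩
      · exact le_trans dist_nonneg (Finset.le_sup' _ (emem t))
      · have : P.filter (fun p => dist (e t) p ≤ P.sup' hP (fun p => dist (e t) p)) = P := by
          apply Finset.filter_true_of_mem
          intro p hp
          exact Finset.le_sup' _ hp
        rw [this]
        exact div_le_self (by positivity) (by exact_mod_cast hk1)
    · rintro r ⟨hr0, hrc⟩
      set W := P.filter (fun p => dist (e t) p ≤ r) with hW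
      have hWcard : m ≤ W.card := by
        rw [hm]
        exact Nat.ceil_le.mpr (by rw [hn]; exact_mod_cast hrc)
      set A : Finset (Fin n) := Finset.univ.filter (fun s => e s ∈ W) with hA
      have hWA : W = A.image e := by
        ext x
        simp only [hA, Finset.mem_image, Finset.mem_filter, Finset.mem_univ, true_and]
        constructor
        · intro hx
          obtain ⟨s, rfl⟩ := esurj x (Finset.mem_filter.mp hx).1
          exact ⟨s, hx, rfl⟩
        · rintro ⟨s, hs, rfl⟩; exact hs
      have hAcard : m ≤ A.card := by
        rw [hWA, Finset.card_image_of_injective _ einj] at hWcard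
        exact hWcard
      have htA : t ∈ A := by
        rw [hA, Finset.mem_filter]
        refine ⟨Finset.mem_univ t, ?_⟩
        rw [hW, Finset.mem_filter]
        exact ⟨emem t, by simpa using hr0⟩
      have hAne : A.Nonempty := ⟨t, htA⟩
      set a := A.min' hAne with ha
      set b := A.max' hAne with hb
      have hat : a ≤ t := A.min'_le t htA
      have htb : t ≤ b := A.le_max' t htA
      have haW : dist (e t) (e a) ≤ r := by
        have := Finset.mem_filter.mp (A.min'_mem hAne)
        exact (Finset.mem_filter.mp this.2).2
      have hbW : dist (e t) (e b) ≤ r := by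
        have := Finset.mem_filter.mp (A.max'_mem hAne)
        exact (Finset.mem_filter.mp this.2).2
      have hIcc : m ≤ (b:ℕ) - (a:ℕ) + 1 := by
        have hsub : A ⊆ Finset.Icc a b := by
          intro s hs
          exact Finset.mem_Icc.mpr ⟨A.min'_le s hs, A.le_max' s hs⟩
        have := Finset.card_le_card hsub
        rw [Fin.card_Icc] at this
        omega
      set j := (t:ℕ) / m with hj
      have h1 : j * m ≤ (t:ℕ) := Nat.div_mul_le_self _ _
      have hsm : (j+1)*m = j*m + m := by ring
      have h2 : (t:ℕ) < (j+1) * m := by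
        have hdm := Nat.div_add_mod (t:ℕ) m
        have hmod := Nat.mod_lt (t:ℕ) hm0
        rw [← hj] at hdm
        have hcomm : m * j = j * m := Nat.mul_comm m j
        omega
      by_cases hcase : (a:ℕ) ≤ j * m
      · -- center at index j*m
        have hjm_lt : j*m < n := lt_of_le_of_lt h1 t.isLt
        have hjk : j < k := by
          have : j * m < k * m := lt_of_lt_of_le hjm_lt hkm
          exact Nat.lt_of_mul_lt_mul_right this
        set c : ℝ := e ⟨j*m, hjm_lt⟩ with hc
        have hcS : c ∈ S := by
          simp only [hS, Finset.mem_image]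
          refine ⟨j, Finset.mem_range.mpr hjk, ?_⟩
          congr 1
          exact Fin.ext (by simp; omega)
        have hac : e a ≤ c := emono (by rw [Fin.le_def]; exact hcase)
        have hct : c ≤ e t := emono (by rw [Fin.le_def]; exact h1)
        have h3 : e t - e a ≤ r := by
          rw [Real.dist_eq, abs_le] at haW; linarith [haW.1, haW.2]
        have hdist : dist (e t) c ≤ r := by
          rw [Real.dist_eq, abs_le]; constructor <;> linarith
        exact le_trans (Metric.infDist_le_dist_of_mem (Finset.mem_coe.mpr hcS)) hdist
      · -- center at index (j+1)*m
        have hblow : (j+1)*m ≤ (b:ℕ) := by omega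
        have hbn : ((b:ℕ)) < n := b.isLt
        have hjm_lt : (j+1)*m < n := lt_of_le_of_lt hblow hbn
        have hjk : j + 1 < k := by
          have : (j+1) * m < k * m := lt_of_lt_of_le hjm_lt hkm
          exact Nat.lt_of_mul_lt_mul_right this
        set c : ℝ := e ⟨(j+1)*m, hjm_lt⟩ with hc
        have hcS : c ∈ S := by
          simp only [hS, Finset.mem_image]
          refine ⟨j+1, Finset.mem_range.mpr hjk, ?_⟩
          congr 1
          exact Fin.ext (by simp; omega)
        have htc : e t ≤ c := emono (by rw [Fin.le_def]; simp; omega)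
        have hcb : c ≤ e b := emono (by rw [Fin.le_def]; exact hblow)
        have h3 : e b - e t ≤ r := by
          rw [Real.dist_eq, abs_le] at hbW; linarith [hbW.1, hbW.2]
        have hdist : dist (e t) c ≤ r := by
          rw [Real.dist_eq, abs_le]; constructor <;> linarith
        exact le_trans (Metric.infDist_le_dist_of_mem (Finset.mem_coe.mpr hcS)) hdist
end

section
/- Let G be a simple graph on a finite vertex set U with |U| = n, and let k be an integer with 1 ≤ k ≤ n and n − k even. Let G' be the simple graph on the vertex set P = U ⊕ (U × Fin 2) ⊕ ((Fin (3(n−k)/2)) × ZMod 4) whose edges are: all edges of G between vertices of U; an edge between u and (u, j) for every u ∈ U and j ∈ Fin 2 (two pendant vertices per vertex of G); and an edge between (c, i) and (c, i+1) for every c ∈ Fin (3(n−k)/2) and i ∈ ZMod 4 (disjoint 4-cycles). Let k' = 3n − 2k, so |P| = 9n − 6k = 3k'. Distances in G' are measured by the shortest-path extended distance edist (taking value ∞ between distinct connected components), and for v ∈ P set NR(v) = min{ r ∈ ℕ∞ : |{w ∈ P : edist(v,w) ≤ r}| ≥ 3 }. If G has a dominating set D ⊆ U with |D| ≤ k, then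 there exists S ⊆ P with |S| ≤ k' such that edist(v,S) ≤ NR(v) for every v ∈ P. -/
/-- The vertex set of the reduction graph: the original vertices `U`, two pendant
vertices per original vertex, and `N` disjoint 4-cycles. -/
abbrev ReductionVertex (U : Type*) (N : ℕ) := U ⊕ (U × Fin 2) ⊕ (Fin N × ZMod 4)

/-- The reduction graph `G'`: all edges of `G`, an edge from each `u ∈ U` to its two
pendant vertices `(u,0)` and `(u,1)`, and `N` disjoint 4-cycles. -/
def reductionGraph {U : Type*} (G : SimpleGraph U) (N : ℕ) :
    SimpleGraph (ReductionVertex U N) :=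
  SimpleGraph.fromRel fun a b =>
    match a, b with
    | Sum.inl u, Sum.inl v => G.Adj u v
    | Sum.inl u, Sum.inr (Sum.inl (v, _)) => u = v
    | Sum.inr (Sum.inr (c, i)), Sum.inr (Sum.inr (c', i')) => c = c' ∧ i' = i + 1
    | _, _ => False

/-- The graph neighborhood radius at `v`: the minimum `r ∈ ℕ∞` such that at least 3
vertices are within shortest-path extended distance `r` of `v`. -/
noncomputable def graphNR {V : Type*} (H : SimpleGraph V) (v : V) : ℕ∞ :=
  sInf {r : ℕ∞ | 3 ≤ {w : V | H.edist v w ≤ r}.ncard}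

/-!
Take as centers the dominating set `D` together with two antipodal vertices of every 4-cycle;
this is `|D| + 2 · 3(n - k)/2 ≤ 3n - 2k` centers. Every vertex of `U` and of a 4-cycle is within
distance 1 of a center, and `NR ≥ 1` everywhere since a radius-0 ball is a single vertex. A pendant
vertex is within distance 2 of a center through its attachment point, and there `NR ≥ 2` because
its radius-1 ball contains only itself and that attachment point.
-/

open Finset SimpleGraph

section graphNR

variable {V : Type*} (H : SimpleGraph V) (v : V)

lemma natCast_add_one_le_graphNR (r : ℕ) (s : Finset V) (hs : #s < 3)
    (hball : ∀ w, H.edist v w ≤ r → w ∈ s) : (r + 1 : ℕ∞) ≤ graphNR H v := by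
  refine le_sInf fun b hb => ?_
  by_contra! hlt
  have hbr : b ≤ r := (ENat.lt_add_one_iff (ENat.natCast_ne_top r)).mp hlt
  have hcard : {w | H.edist v w ≤ b}.ncard ≤ #s :=
    (Set.ncard_le_ncard (fun w hw => hball w (le_trans hw hbr)) s.finite_toSet).trans
      (Set.ncard_coe_finset s).le
  exact absurd (le_trans hb hcard) (by omega)

lemma one_le_graphNR : 1 ≤ graphNR H v := by
  refine le_of_eq_of_le (by norm_num)
    (natCast_add_one_le_graphNR H v 0 {v} (by simp) fun w hw => ?_)
  rw [Nat.cast_zero, nonpos_iff_eq_zero, edist_eq_zero_iff] at hw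
  exact mem_singleton.mpr hw.symm

lemma two_le_graphNR_of_neighborSet_subset {u : V} (hu : H.neighborSet v ⊆ {u}) :
    2 ≤ graphNR H v := by
  classical
  refine le_of_eq_of_le (by norm_num) (natCast_add_one_le_graphNR H v 1 {v, u}
    ((card_le_two).trans_lt (by norm_num)) fun w hw => ?_)
  rcases edist_le_one_iff_adj_or_eq.mp (by simpa using hw) with hadj | rfl
  · simp [Set.mem_singleton_iff.mp (hu hadj)]
  · simp

end graphNR

section reductionGraph

variable {U : Type*} (G : SimpleGraph U) {N : ℕ}

lemma reductionGraph_adj_inl_inl {u v : U} :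
    (reductionGraph G N).Adj (.inl u) (.inl v) ↔ G.Adj u v := by
  simp only [reductionGraph, SimpleGraph.fromRel_adj, ne_eq, Sum.inl.injEq]
  exact ⟨fun h => h.2.elim id G.adj_symm, fun h => ⟨h.ne, .inl h⟩⟩

lemma reductionGraph_adj_inl_pendant (u : U) (j : Fin 2) :
    (reductionGraph G N).Adj (.inl u) (.inr (.inl (u, j))) := by
  simp [reductionGraph]

lemma reductionGraph_adj_cycle (c : Fin N) (i : ZMod 4) :
    (reductionGraph G N).Adj (.inr (.inr (c, i))) (.inr (.inr (c, i + 1))) := by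
  simp [reductionGraph]
  decide

lemma reductionGraph_neighborSet_pendant_subset (u : U) (j : Fin 2) :
    (reductionGraph G N).neighborSet (.inr (.inl (u, j))) ⊆ {.inl u} := by
  rintro (v | ⟨v, j'⟩ | ⟨c, i⟩) h <;> simp_all [reductionGraph]

def reductionCenters (D : Finset U) (N : ℕ) : Finset (ReductionVertex U N) :=
  D.disjSum ((∅ : Finset (U × Fin 2)).disjSum (univ ×ˢ {0, 2}))

lemma card_reductionCenters (D : Finset U) (N : ℕ) : #(reductionCenters D N) = #D + 2 * N := by
  have h02 : #({0, 2} : Finset (ZMod 4)) = 2 := by decide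
  simp only [reductionCenters, card_disjSum, card_empty, card_product, card_univ, Fintype.card_fin,
    h02]
  ring

lemma exists_reductionCenters_edist_inl_le_one {D : Finset U}
    (hdom : ∀ u : U, u ∈ D ∨ ∃ d ∈ D, G.Adj u d) (u : U) :
    ∃ s ∈ reductionCenters D N, (reductionGraph G N).edist (.inl u) s ≤ 1 := by
  rcases hdom u with hu | ⟨d, hd, hadj⟩
  · exact ⟨.inl u, by simpa [reductionCenters] using hu, by simp⟩
  · exact ⟨.inl d, by simpa [reductionCenters] using hd,
      (edist_eq_one_iff_adj.mpr ((reductionGraph_adj_inl_inl G).mpr hadj)).le⟩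

lemma exists_reductionCenters_edist_cycle_le_one (D : Finset U) (c : Fin N) (i : ZMod 4) :
    ∃ s ∈ reductionCenters D N, (reductionGraph G N).edist (.inr (.inr (c, i))) s ≤ 1 := by
  obtain hi | hi : i ∈ ({0, 2} : Finset (ZMod 4)) ∨ i + 1 ∈ ({0, 2} : Finset (ZMod 4)) := by
    revert i; decide
  · exact ⟨.inr (.inr (c, i)), by simpa [reductionCenters] using hi, by simp⟩
  · exact ⟨.inr (.inr (c, i + 1)), by simpa [reductionCenters] using hi,
      (edist_eq_one_iff_adj.mpr (reductionGraph_adj_cycle G c i)).le⟩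

end reductionGraph

theorem dominatingSet_to_one_fair_general {U : Type*}
    (G : SimpleGraph U) (n k : ℕ)
    (hk2 : k ≤ n) (heven : Even (n - k))
    (D : Finset U) (hDcard : D.card ≤ k)
    (hdom : ∀ u : U, u ∈ D ∨ ∃ d ∈ D, G.Adj u d) :
    ∃ S : Finset (ReductionVertex U (3 * (n - k) / 2)),
      S.card ≤ 3 * n - 2 * k ∧
      ∀ v : ReductionVertex U (3 * (n - k) / 2), ∃ s ∈ S,
        (reductionGraph G (3 * (n - k) / 2)).edist v s ≤
          graphNR (reductionGraph G (3 * (n - k) / 2)) v := by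
  refine ⟨reductionCenters D _, ?_, ?_⟩
  · rw [card_reductionCenters]
    obtain ⟨m, hm⟩ := heven
    omega
  rintro (u | ⟨u, j⟩ | ⟨c, i⟩)
  · obtain ⟨s, hs, hdist⟩ := exists_reductionCenters_edist_inl_le_one G hdom u
    exact ⟨s, hs, hdist.trans (one_le_graphNR _ _)⟩
  · obtain ⟨s, hs, hdist⟩ := exists_reductionCenters_edist_inl_le_one G hdom u
    refine ⟨s, hs, ?_⟩
    calc _ ≤ _ + _ := SimpleGraph.edist_triangle
      _ ≤ 1 + 1 := add_le_add (edist_eq_one_iff_adj.mpr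
          (reductionGraph_adj_inl_pendant G u j).symm).le hdist
      _ ≤ _ := two_le_graphNR_of_neighborSet_subset _ _
          (reductionGraph_neighborSet_pendant_subset G u j)
  · obtain ⟨s, hs, hdist⟩ := exists_reductionCenters_edist_cycle_le_one G D c i
    exact ⟨s, hs, hdist.trans (one_le_graphNR _ _)⟩

/-- If `G` has a dominating set of size at most `k`, then 1-fairness is achievable on the
reduction instance with `k' = 3n − 2k` centers. -/
theorem dominatingSet_to_one_fair {U : Type*} [Fintype U] [DecidableEq U]
    (G : SimpleGraph U) (n k : ℕ) (hn : Fintype.card U = n)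
    (hk1 : 1 ≤ k) (hk2 : k ≤ n) (heven : Even (n - k))
    (D : Finset U) (hDcard : D.card ≤ k)
    (hdom : ∀ u : U, u ∈ D ∨ ∃ d ∈ D, G.Adj u d) :
    ∃ S : Finset (ReductionVertex U (3 * (n - k) / 2)),
      S.card ≤ 3 * n - 2 * k ∧
      ∀ v : ReductionVertex U (3 * (n - k) / 2), ∃ s ∈ S,
        (reductionGraph G (3 * (n - k) / 2)).edist v s ≤
          graphNR (reductionGraph G (3 * (n - k) / 2)) v :=
  dominatingSet_to_one_fair_general G n k hk2 heven D hDcard hdom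
end

section
/- Let G be a simple graph on a finite vertex set U with |U| = n, and let k be an integer with 1 ≤ k ≤ n and n − k even. Let G' be the simple graph on the vertex set P = U ⊕ (U × Fin 2) ⊕ ((Fin (3(n−k)/2)) × ZMod 4) whose edges are: all edges of G between vertices of U; an edge between u and (u, j) for every u ∈ U and j ∈ Fin 2 (two pendant vertices per vertex of G); and an edge between (c, i) and (c, i+1) for every c ∈ Fin (3(n−k)/2) and i ∈ ZMod 4 (disjoint 4-cycles). Let k' = 3n − 2k, so |P| = 9n − 6k = 3k'. Distances in G' are measured by the shortest-path extended distance edist (taking value ∞ between distinct connected components), and for v ∈ P set NR(v) = min{ r ∈ ℕ∞ : |{w ∈ P : edist(v,w) ≤ r}| ≥ 3 }. If there exists S ⊆ P with |S| ≤ k' such that edist(v,S) ≤ NR(v) for every v ∈ P, then G has a dominating set D ⊆ U with |D| ≤ k. (Together with the converse, this shows determining whether 1-fairness is achievable is NP-hard, by reduction from Dominating Set.) -/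
lemma edist_le_one' {V : Type*} {H : SimpleGraph V} {v w : V} :
    H.edist v w ≤ 1 ↔ v = w ∨ H.Adj v w := by
  constructor
  · intro h
    rcases lt_or_eq_of_le h with h | h
    · left; exact SimpleGraph.edist_eq_zero_iff.mp (ENat.lt_one_iff_eq_zero.mp h)
    · right; exact SimpleGraph.edist_eq_one_iff_adj.mp h
  · rintro (rfl | h)
    · simp [SimpleGraph.edist_self]
    · exact le_of_eq (SimpleGraph.edist_eq_one_iff_adj.mpr h)

lemma NR_le_one' {V : Type*} [Finite V] {H : SimpleGraph V} {v a b : V}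
    (hab : a ≠ b) (hva : H.Adj v a) (hvb : H.Adj v b) : graphNR H v ≤ 1 := by
  apply sInf_le
  have hsub : ({v, a, b} : Set V) ⊆ {w : V | H.edist v w ≤ 1} := by
    rintro x (rfl | rfl | rfl)
    · simp [SimpleGraph.edist_self]
    · exact edist_le_one'.mpr (Or.inr hva)
    · exact edist_le_one'.mpr (Or.inr hvb)
  have h3 : ({v, a, b} : Set V).ncard = 3 :=
    Set.ncard_eq_three.mpr ⟨v, a, b, hva.ne, hvb.ne, hab, rfl⟩
  have := Set.ncard_le_ncard hsub (Set.toFinite _)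
  simpa [h3] using this

lemma one_fair_aux {U : Type*} [Fintype U] [DecidableEq U]
    (G : SimpleGraph U) (n k : ℕ) (hn : Fintype.card U = n)
    (hk1 : 1 ≤ k) (hk2 : k ≤ n)
    (N : ℕ) (hNN : 2 * N = 3 * (n - k))
    (S : Finset (ReductionVertex U N))
    (hScard : S.card ≤ 3 * n - 2 * k)
    (hfair : ∀ v : ReductionVertex U N, ∃ s ∈ S,
      (reductionGraph G N).edist v s ≤ graphNR (reductionGraph G N) v) :
    ∃ D : Finset U, D.card ≤ k ∧ ∀ u : U, u ∈ D ∨ ∃ d ∈ D, G.Adj u d := by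
  classical
  set G' := reductionGraph G N with hG'
  haveI : Nonempty U := by rw [← Fintype.card_pos_iff]; omega
  obtain ⟨u₀⟩ := ‹Nonempty U›
  -- adjacency facts
  have pend_adj : ∀ (u : U) (j : Fin 2), G'.Adj (Sum.inl u) (Sum.inr (Sum.inl (u, j))) := by
    intro u j; simp [hG', reductionGraph, SimpleGraph.fromRel_adj]
  have cyc_adj : ∀ (c : Fin N) (i : ZMod 4),
      G'.Adj (Sum.inr (Sum.inr (c, i))) (Sum.inr (Sum.inr (c, i + 1))) := by
    intro c i; simp [hG', reductionGraph, SimpleGraph.fromRel_adj]; decide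
  -- NR bounds
  have NRu : ∀ u : U, graphNR G' (Sum.inl u) ≤ 1 := fun u =>
    NR_le_one' (by simp) (pend_adj u 0) (pend_adj u 1)
  have NRc : ∀ (c : Fin N) (i : ZMod 4), graphNR G' (Sum.inr (Sum.inr (c, i))) ≤ 1 := by
    intro c i
    have h1 := cyc_adj c i
    have h2 := (cyc_adj c (i - 1)).symm
    have e : i - 1 + 1 = i := by ring
    rw [e] at h2
    refine NR_le_one' ?_ h1 h2
    intro h
    have h' : (Sum.inr (Sum.inr (c, i + 1)) : ReductionVertex U N)
        = Sum.inr (Sum.inr (c, i - 1)) := h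
    simp only [Sum.inr.injEq, Prod.mk.injEq] at h'
    have := congrArg (· - i) h'.2
    simp only [add_sub_cancel_left, sub_sub_cancel_left] at this
    revert this; decide
  -- fairness consequences
  have fairU : ∀ u : U, ∃ s ∈ S, Sum.inl u = s ∨ G'.Adj (Sum.inl u) s := by
    intro u
    obtain ⟨s, hs, hd⟩ := hfair (Sum.inl u)
    exact ⟨s, hs, edist_le_one'.mp (hd.trans (NRu u))⟩
  have fairC : ∀ (c : Fin N) (i : ZMod 4), ∃ s ∈ S,
      (Sum.inr (Sum.inr (c, i)) : ReductionVertex U N) = s ∨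
        G'.Adj (Sum.inr (Sum.inr (c, i))) s := by
    intro c i
    obtain ⟨s, hs, hd⟩ := hfair (Sum.inr (Sum.inr (c, i)))
    exact ⟨s, hs, edist_le_one'.mp (hd.trans (NRc c i))⟩
  -- structure of cycle adjacency
  have adj_cyc : ∀ (c : Fin N) (i : ZMod 4) (b : ReductionVertex U N),
      G'.Adj (Sum.inr (Sum.inr (c, i))) b →
        ∃ j : ZMod 4, b = Sum.inr (Sum.inr (c, j)) ∧ (j = i + 1 ∨ i = j + 1) := by
    rintro c i (u | ⟨u, j⟩ | ⟨c', i'⟩) h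
    · simp [hG', reductionGraph, SimpleGraph.fromRel_adj] at h
    · simp [hG', reductionGraph, SimpleGraph.fromRel_adj] at h
    · simp only [hG', reductionGraph, SimpleGraph.fromRel_adj] at h
      obtain ⟨-, (⟨rfl, rfl⟩ | ⟨rfl, hii⟩)⟩ := h
      · exact ⟨i + 1, rfl, Or.inl rfl⟩
      · exact ⟨i', rfl, Or.inr hii⟩
  -- per-cycle part of S
  set Sc : Fin N → Finset (ReductionVertex U N) :=
    fun c => S.filter (fun s => ∃ j : ZMod 4, s = Sum.inr (Sum.inr (c, j))) with hSc
  have two_le : ∀ c : Fin N, 2 ≤ (Sc c).card := by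
    intro c
    obtain ⟨s₀, hs₀, hcase₀⟩ := fairC c 0
    obtain ⟨j₀, rfl⟩ : ∃ j₀ : ZMod 4, s₀ = Sum.inr (Sum.inr (c, j₀)) := by
      rcases hcase₀ with h | h
      · exact ⟨0, h.symm⟩
      · obtain ⟨j, hj, -⟩ := adj_cyc c 0 s₀ h; exact ⟨j, hj⟩
    obtain ⟨s₁, hs₁, hcase₁⟩ := fairC c (j₀ + 2)
    obtain ⟨j₁, rfl, hj₁⟩ : ∃ j₁ : ZMod 4, s₁ = Sum.inr (Sum.inr (c, j₁)) ∧
        (j₁ = j₀ + 2 ∨ j₁ = j₀ + 3 ∨ j₁ = j₀ + 1) := by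
      rcases hcase₁ with h | h
      · exact ⟨j₀ + 2, h.symm, Or.inl rfl⟩
      · obtain ⟨j, hj, hh⟩ := adj_cyc c (j₀ + 2) s₁ h
        refine ⟨j, hj, ?_⟩
        rcases hh with rfl | hh
        · right; left; ring
        · right; right; linear_combination -hh
    have hne : j₁ ≠ j₀ := by
      rcases hj₁ with rfl | rfl | rfl <;>
        · intro h
          have := congrArg (· - j₀) h
          simp only [add_sub_cancel_left, sub_self] at this
          revert this; decide
    refine Finset.one_lt_card.mpr ⟨_, Finset.mem_filter.mpr ⟨hs₁, j₁, rfl⟩,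
      _, Finset.mem_filter.mpr ⟨hs₀, j₀, rfl⟩, fun h => hne ?_⟩
    simpa using h
  -- counting
  have hdisj : ∀ c ∈ (Finset.univ : Finset (Fin N)), ∀ c' ∈ Finset.univ, c ≠ c' →
      Disjoint (Sc c) (Sc c') := by
    intro c _ c' _ hcc
    refine Finset.disjoint_left.mpr ?_
    rintro s hs hs'
    obtain ⟨-, j, rfl⟩ := Finset.mem_filter.mp hs
    obtain ⟨-, j', h⟩ := Finset.mem_filter.mp hs'
    simp only [Sum.inr.injEq, Prod.mk.injEq] at h
    exact hcc h.1
  have hcyc_card : 2 * N ≤ (Finset.univ.biUnion Sc).card := by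
    rw [Finset.card_biUnion hdisj]
    calc 2 * N = ∑ _c : Fin N, 2 := by simp [mul_comm]
    _ ≤ ∑ c : Fin N, (Sc c).card := Finset.sum_le_sum fun c _ => two_le c
  have hsub : Finset.univ.biUnion Sc ⊆ S := by
    intro s hs
    obtain ⟨c, -, hc⟩ := Finset.mem_biUnion.mp hs
    exact (Finset.mem_filter.mp hc).1
  -- the non-cycle part
  set p : ReductionVertex U N → Prop := fun s => ∀ (c : Fin N) (j : ZMod 4),
    s ≠ Sum.inr (Sum.inr (c, j)) with hp
  set Snon := S.filter p with hSnon
  have hbU : Finset.univ.biUnion Sc ⊆ S.filter (fun s => ¬ p s) := by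
    intro s hs
    obtain ⟨c, -, hc⟩ := Finset.mem_biUnion.mp hs
    obtain ⟨hsS, j, rfl⟩ := Finset.mem_filter.mp hc
    exact Finset.mem_filter.mpr ⟨hsS, fun h => h c j rfl⟩
  have hsplit := Finset.card_filter_add_card_filter_not (s := S) (p := p)
  have hSnon_card : Snon.card ≤ k := by
    have h1 : 2 * N ≤ (S.filter (fun s => ¬ p s)).card :=
      le_trans hcyc_card (Finset.card_le_card hbU)
    have h2 : Snon.card = (S.filter p).card := by rw [hSnon]
    omega
  -- build the dominating set
  set g : ReductionVertex U N → U := fun s => match s with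
    | Sum.inl u => u
    | Sum.inr (Sum.inl (u, _)) => u
    | Sum.inr (Sum.inr _) => u₀ with hg
  refine ⟨Snon.image g, le_trans Finset.card_image_le hSnon_card, fun u => ?_⟩
  obtain ⟨s, hs, hcase⟩ := fairU u
  rcases hcase with rfl | h
  · left
    exact Finset.mem_image.mpr ⟨Sum.inl u,
      Finset.mem_filter.mpr ⟨hs, fun c j h => by simp at h⟩, rfl⟩
  · rcases s with v | ⟨v, j⟩ | ⟨c, i⟩
    · right
      simp only [hG', reductionGraph, SimpleGraph.fromRel_adj] at h
      obtain ⟨-, hadj⟩ := h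
      refine ⟨v, Finset.mem_image.mpr ⟨Sum.inl v,
        Finset.mem_filter.mpr ⟨hs, fun c j h => by simp at h⟩, rfl⟩, ?_⟩
      rcases hadj with h | h
      · exact h
      · exact h.symm
    · left
      simp only [hG', reductionGraph, SimpleGraph.fromRel_adj] at h
      obtain ⟨-, (rfl | h)⟩ := h
      · exact Finset.mem_image.mpr ⟨Sum.inr (Sum.inl (u, j)),
          Finset.mem_filter.mpr ⟨hs, fun c j h => by simp at h⟩, rfl⟩
      · exact absurd h (by simp)
    · rw [hG', reductionGraph, SimpleGraph.fromRel_adj] at h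
      exact (h.2.elim id id).elim

/-- If 1-fairness is achievable on the reduction instance with `k' = 3n − 2k` centers,
then `G` has a dominating set of size at most `k`. -/
theorem one_fair_to_dominatingSet {U : Type*} [Fintype U] [DecidableEq U]
    (G : SimpleGraph U) (n k : ℕ) (hn : Fintype.card U = n)
    (hk1 : 1 ≤ k) (hk2 : k ≤ n) (heven : Even (n - k))
    (S : Finset (ReductionVertex U (3 * (n - k) / 2)))
    (hScard : S.card ≤ 3 * n - 2 * k)
    (hfair : ∀ v : ReductionVertex U (3 * (n - k) / 2), ∃ s ∈ S,
      (reductionGraph G (3 * (n - k) / 2)).edist v s ≤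
        graphNR (reductionGraph G (3 * (n - k) / 2)) v) :
    ∃ D : Finset U, D.card ≤ k ∧ ∀ u : U, u ∈ D ∨ ∃ d ∈ D, G.Adj u d := by
  obtain ⟨m, hm⟩ := heven
  exact one_fair_aux G n k hn hk1 hk2 (3 * (n - k) / 2) (by omega) S hScard hfair
end

section
/- Let x ≥ 2 be a real number, let P be the multiset of real numbers {−x, 0, 0, 1, 1, x}, and let k = 3, so that the threshold count |P|/k equals 2. Define the neighborhood radius of a point i ∈ ℝ as NR(i) = min{ r ≥ 0 : at least 2 elements of P (with multiplicity) lie within distance r of i }. Then NR(1) = 0, the distance from 1 to the set S = {−x, 0, x} is 1, and consequently for every real number α there exists an element i of P with d(i,S) > α·NR(i). (The optimal k-center/k-medians/k-means solution on this instance fails α-fairness for every finite α.) -/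
open scoped Classical

/-- The neighborhood radius of `i ∈ ℝ` with respect to a finite multiset `P` of reals and
parameter `k`: the minimum `r ≥ 0` such that at least `|P|/k` elements of `P` (counted with
multiplicity) lie within distance `r` of `i`. -/
noncomputable def NRmul (P : Multiset ℝ) (k : ℕ) (i : ℝ) : ℝ :=
  sInf {r : ℝ | 0 ≤ r ∧
    ((Multiset.card P : ℝ) / (k : ℝ) ≤ ((P.filter fun p => |i - p| ≤ r).card : ℝ))}

/-- For the population `{−x, 0, 0, 1, 1, x}` with `k = 3` (so the threshold `|P|/k` is 2),
the point `1` has neighborhood radius 0 but is at distance 1 from the solution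
`S = {−x, 0, x}` that is optimal for `k`-center, `k`-medians, and `k`-means; hence `S`
fails `α`-fairness for every real `α`. -/
theorem classic_objectives_unboundedly_unfair (x : ℝ) (hx : 2 ≤ x) :
    NRmul ({-x, 0, 0, 1, 1, x} : Multiset ℝ) 3 1 = 0 ∧
    Metric.infDist 1 ({-x, 0, x} : Set ℝ) = 1 ∧
    ∀ α : ℝ, ∃ i ∈ ({-x, 0, 0, 1, 1, x} : Multiset ℝ),
      α * NRmul ({-x, 0, 0, 1, 1, x} : Multiset ℝ) 3 i <
        Metric.infDist i ({-x, 0, x} : Set ℝ) := by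
  have hNR : NRmul ({-x, 0, 0, 1, 1, x} : Multiset ℝ) 3 1 = 0 := by
    unfold NRmul
    have hmem : (0 : ℝ) ∈ {r : ℝ | 0 ≤ r ∧
        ((Multiset.card ({-x, 0, 0, 1, 1, x} : Multiset ℝ) : ℝ) / ((3:ℕ) : ℝ) ≤
          (((({-x, 0, 0, 1, 1, x} : Multiset ℝ)).filter fun p => |1 - p| ≤ r).card : ℝ))} := by
      constructor
      · exact le_rfl
      · have h1 : ¬ (|(1:ℝ) - (-x)| ≤ 0) := by
          rw [abs_sub_comm]; rw [abs_le]; push_neg; intro h; nlinarith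
        have h2 : ¬ (|(1:ℝ) - 0| ≤ 0) := by norm_num
        have h3 : (|(1:ℝ) - 1| ≤ 0) := by norm_num
        have h4 : ¬ (|(1:ℝ) - x| ≤ 0) := by
          rw [abs_le]; push_neg; intro h; nlinarith
        have e1 : (1:ℝ) + x ≠ 0 := by nlinarith
        have e2 : (1:ℝ) - x ≠ 0 := by nlinarith
        simp [Multiset.filter_cons, Multiset.filter_singleton, h1, h2, h3, h4, e1, e2]
        norm_num
    have hbdd : BddBelow {r : ℝ | 0 ≤ r ∧
        ((Multiset.card ({-x, 0, 0, 1, 1, x} : Multiset ℝ) : ℝ) / ((3:ℕ) : ℝ) ≤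
          (((({-x, 0, 0, 1, 1, x} : Multiset ℝ)).filter fun p => |1 - p| ≤ r).card : ℝ))} :=
      ⟨0, fun r hr => hr.1⟩
    apply le_antisymm
    · exact csInf_le hbdd hmem
    · exact le_csInf ⟨0, hmem⟩ fun r hr => hr.1
  have hS : ({-x, 0, x} : Set ℝ).Nonempty := ⟨0, by simp⟩
  have hd : Metric.infDist 1 ({-x, 0, x} : Set ℝ) = 1 := by
    apply le_antisymm
    · have := Metric.infDist_le_dist_of_mem (x := (1:ℝ)) (y := (0:ℝ))
        (s := ({-x, 0, x} : Set ℝ)) (by simp)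
      simpa [Real.dist_eq] using this
    · by_contra hcon
      rw [not_le, Metric.infDist_lt_iff hS] at hcon
      obtain ⟨y, hy, hlt⟩ := hcon
      rw [Real.dist_eq, abs_lt] at hlt
      rcases hy with h | h | h <;> subst h <;>
        [skip; skip; skip] <;> { obtain ⟨l, r⟩ := hlt; linarith }
  refine ⟨hNR, hd, fun α => ⟨1, by simp, ?_⟩⟩
  rw [hNR, hd, mul_zero]
  norm_num
end
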